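/- arXiv:2405.05939 — 2 statements merged into one kernel-verified Lean document; each statement's English description precedes it below -/
import Mathlib

section
/- Let $a_1 < a_2 < \dots < a_l$ be integers with consecutive gaps bounded by $b$ (i.e., $a_{i+1} - a_i \le b$ for all $1 \le i < l$), and let $A = \{a_1, \dots, a_l\}$. Then for every $n > 2b^2$, the $n$-fold sumset satisfies $nA = (n - 2b^2)\{a_1, a_l\} + 2b^2 A$, where $kS$ denotes the $k$-fold sumset $S + S + \dots + S$. -/
/-!
Write `m = a₁`, `M = a_l`. As the gaps are at most `b`, every window `[v, v + b)` with `v ≤ M`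
and `m < v + b` meets `A`, and for `u, v ∈ A` one of `u + v - m`, `u + v - M` lies in `[m, M]`.
Hence every pair sum is `e + w₁ + r₁ = e + w₂ - r₂` with `e ∈ {m, M}`, `wᵢ ∈ A`, `0 ≤ rᵢ < b`.
Split a `(4b - 2)`-fold sum into `2b - 1` pair sums and choose the signs of the errors greedily,
so that the running error stays in `(-b, b)`. Two of its `2b` values coincide, so on a block of
pairs the errors cancel and these pairs become exactly `eᵢ + wᵢ`. Pulling out one `eᵢ` gives
`(4b - 2)A ⊆ {m, M} + (4b - 3)A`, and as `4b - 3 ≤ 2b²` iterating this proves the theorem.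
-/

open Pointwise

/-- The `n`-fold sumset of `A`. -/
def foldSum {G : Type*} [AddCommMonoid G] (n : ℕ) (A : Set G) : Set G :=
  {t | ∃ s : Fin n → G, (∀ i, s i ∈ A) ∧ ∑ i, s i = t}

open Finset

theorem foldSum_eq_nsmul {G : Type*} [AddCommMonoid G] (n : ℕ) (A : Set G) :
    foldSum n A = n • A :=
  Set.ext fun _ => Set.mem_nsmul_iff_sum.symm

namespace Set

variable {G : Type*} [AddCommMonoid G]

theorem finsetSum_mem_card_nsmul {ι : Type*} {S : Set G} (t : Finset ι) {g : ι → G}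
    (hg : ∀ i ∈ t, g i ∈ S) : ∑ i ∈ t, g i ∈ #t • S := by
  simpa using finsetSum_mem_finsetSum t (fun _ => S) g hg

theorem add_nsmul_eq_nsmul_add_nsmul {E A : Set G} {N : ℕ} (hE : E ⊆ A)
    (h : (N + 1) • A ⊆ E + N • A) (k : ℕ) : (N + k) • A = k • E + N • A := by
  induction k with
  | zero => simp
  | succ k ih =>
    refine subset_antisymm ?_ ?_
    · calc (N + (k + 1)) • A = k • A + (N + 1) • A := by rw [← add_nsmul]; ring_nf
        _ ⊆ k • A + (E + N • A) := add_subset_add_left h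
        _ = E + (N + k) • A := by rw [add_nsmul]; abel
        _ = (k + 1) • E + N • A := by rw [ih, succ_nsmul]; abel
    · calc (k + 1) • E + N • A ⊆ (k + 1) • A + N • A :=
          add_subset_add_right (nsmul_subset_nsmul_left hE)
        _ = (N + (k + 1)) • A := by rw [← add_nsmul, add_comm]

theorem nsmul_eq_nsmul_add_nsmul_of_le {E A : Set G} {N M n : ℕ} (hE : E ⊆ A)
    (h : (N + 1) • A ⊆ E + N • A) (hNM : N ≤ M) (hMn : M ≤ n) :
    n • A = (n - M) • E + M • A := by
  obtain ⟨k, rfl⟩ := Nat.exists_eq_add_of_le hNM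
  obtain ⟨j, rfl⟩ := Nat.exists_eq_add_of_le hMn
  rw [add_assoc, add_nsmul_eq_nsmul_add_nsmul hE h, add_nsmul_eq_nsmul_add_nsmul hE h,
    show N + (k + j) - (N + k) = j by omega, add_nsmul]
  abel

theorem finsetSum_mem_add_nsmul_of_block {E A : Set G} (hE : E ⊆ A) {T B : Finset ℕ}
    (hBT : B ⊆ T) {i₀ : ℕ} (hi₀ : i₀ ∈ B) {g e w : ℕ → G} (hg : ∀ i ∈ T, g i ∈ A + A)
    (he : ∀ i ∈ B, e i ∈ E) (hw : ∀ i ∈ B, w i ∈ A)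
    (hB : ∑ i ∈ B, g i = ∑ i ∈ B, (e i + w i)) :
    ∑ i ∈ T, g i ∈ E + (2 * #T - 1) • A := by
  have hrest : ∑ i ∈ T \ B, g i ∈ (2 * #(T \ B)) • A := by
    rw [mul_nsmul, two_nsmul]
    exact finsetSum_mem_card_nsmul _ fun i hi => hg i (Finset.mem_sdiff.1 hi).1
  have he' : ∑ i ∈ B.erase i₀, e i ∈ #(B.erase i₀) • A :=
    finsetSum_mem_card_nsmul _ fun i hi => hE (he i (mem_of_mem_erase hi))
  have hw' : ∑ i ∈ B, w i ∈ #B • A := finsetSum_mem_card_nsmul _ hw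
  have hcard : 2 * #(T \ B) + (#(B.erase i₀) + #B) = 2 * #T - 1 := by
    have := Finset.card_le_card hBT
    have := Finset.card_pos.2 ⟨i₀, hi₀⟩
    rw [card_sdiff_of_subset hBT, card_erase_of_mem hi₀]
    omega
  have hsum : ∑ i ∈ T, g i =
      e i₀ + (∑ i ∈ T \ B, g i + (∑ i ∈ B.erase i₀, e i + ∑ i ∈ B, w i)) := by
    rw [← sum_sdiff hBT, hB, sum_add_distrib, ← add_sum_erase B e hi₀]
    abel
  rw [hsum, ← hcard, add_nsmul, add_nsmul]
  exact add_mem_add (he i₀ hi₀) (add_mem_add hrest (add_mem_add he' hw'))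

end Set

def balancingWalk (p q : ℕ → ℤ) : ℕ → ℤ
  | 0 => 0
  | k + 1 => if balancingWalk p q k ≤ 0 then balancingWalk p q k + p k
      else balancingWalk p q k - q k

section BalancingWalk

variable {b K : ℕ} {p q : ℕ → ℤ}

theorem balancingWalk_mem_Ioo (hb : 1 ≤ b) (hp : ∀ i < K, 0 ≤ p i ∧ p i < b)
    (hq : ∀ i < K, 0 ≤ q i ∧ q i < b) {k : ℕ} (hk : k ≤ K) :
    balancingWalk p q k ∈ Set.Ioo (-(b : ℤ)) b := by
  induction k with
  | zero => simp only [balancingWalk, Set.mem_Ioo]; omega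
  | succ k ih =>
    have := ih (by omega)
    have := hp k (by omega)
    have := hq k (by omega)
    simp only [balancingWalk, Set.mem_Ioo] at *
    split_ifs <;> omega

theorem exists_lt_balancingWalk_eq (hb : 1 ≤ b) (hp : ∀ i < 2 * b - 1, 0 ≤ p i ∧ p i < b)
    (hq : ∀ i < 2 * b - 1, 0 ≤ q i ∧ q i < b) :
    ∃ k₁ k₂, k₁ < k₂ ∧ k₂ ≤ 2 * b - 1 ∧ balancingWalk p q k₁ = balancingWalk p q k₂ := by
  have hcard : #(Ioo (-(b : ℤ)) b) < #(range (2 * b)) := by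
    rw [Int.card_Ioo, card_range]
    omega
  obtain ⟨k₁, hk₁, k₂, hk₂, hne, heq⟩ := exists_ne_map_eq_of_card_lt_of_maps_to hcard
    (f := balancingWalk p q) fun k hk => by
      simpa using balancingWalk_mem_Ioo hb hp hq (by simp at hk; omega)
  rw [mem_range] at hk₁ hk₂
  rcases hne.lt_or_gt with h | h
  · exact ⟨k₁, k₂, h, by omega, heq⟩
  · exact ⟨k₂, k₁, h, by omega, heq.symm⟩

theorem exists_Ico_sum_eq_zero (hb : 1 ≤ b) (hp : ∀ i < 2 * b - 1, 0 ≤ p i ∧ p i < b)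
    (hq : ∀ i < 2 * b - 1, 0 ≤ q i ∧ q i < b) :
    ∃ k₁ k₂, k₁ < k₂ ∧ k₂ ≤ 2 * b - 1 ∧
      ∃ c : ℕ → Bool, ∑ i ∈ Ico k₁ k₂, (if c i then p i else -q i) = 0 := by
  obtain ⟨k₁, k₂, hlt, hk₂, heq⟩ := exists_lt_balancingWalk_eq hb hp hq
  refine ⟨k₁, k₂, hlt, hk₂, fun i => decide (balancingWalk p q i ≤ 0), ?_⟩
  calc ∑ i ∈ Ico k₁ k₂, (if decide (balancingWalk p q i ≤ 0) then p i else -q i)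
      = ∑ i ∈ Ico k₁ k₂, (balancingWalk p q (i + 1) - balancingWalk p q i) := by
        refine sum_congr rfl fun i _ => ?_
        rw [balancingWalk]
        by_cases h : balancingWalk p q i ≤ 0 <;> simp [h]
    _ = 0 := by rw [sum_Ico_sub _ hlt.le, heq, sub_self]

end BalancingWalk

section Windows

variable {A : Set ℤ} {m M : ℤ} {b : ℕ}

theorem exists_endpoint_decomp (hb : 1 ≤ b) (hA : A ⊆ Set.Icc m M)
    (hwin : ∀ v, m < v + b → v ≤ M → ∃ w ∈ A, v ≤ w ∧ w < v + b) {s : ℤ} (hs : s ∈ A + A) :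
    ∃ e ∈ ({m, M} : Set ℤ), ∃ w₁ ∈ A, ∃ w₂ ∈ A, ∃ r₁ r₂ : ℤ,
      0 ≤ r₁ ∧ r₁ < b ∧ 0 ≤ r₂ ∧ r₂ < b ∧ s = e + w₁ + r₁ ∧ s = e + w₂ - r₂ := by
  obtain ⟨u, hu, v, hv, rfl⟩ := hs
  obtain ⟨hu₁, hu₂⟩ := hA hu
  obtain ⟨hv₁, hv₂⟩ := hA hv
  obtain ⟨e, he, hme, heM⟩ : ∃ e ∈ ({m, M} : Set ℤ), m ≤ u + v - e ∧ u + v - e ≤ M := by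
    by_cases h : u + v ≤ m + M
    · exact ⟨m, Or.inl rfl, by omega, by omega⟩
    · exact ⟨M, Or.inr rfl, by omega, by omega⟩
  obtain ⟨w₁, hw₁, h₁, h₁'⟩ := hwin (u + v - e - b + 1) (by omega) (by omega)
  obtain ⟨w₂, hw₂, h₂, h₂'⟩ := hwin (u + v - e) (by omega) (by omega)
  exact ⟨e, he, w₁, hw₁, w₂, hw₂, u + v - e - w₁, w₂ - (u + v - e),
    by omega, by omega, by omega, by omega, by ring, by ring⟩

theorem nsmul_subset_endpoints_add_nsmul (hb : 1 ≤ b) (hm : m ∈ A) (hM : M ∈ A)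
    (hA : A ⊆ Set.Icc m M)
    (hwin : ∀ v, m < v + b → v ≤ M → ∃ w ∈ A, v ≤ w ∧ w < v + b) :
    (4 * b - 2) • A ⊆ {m, M} + (4 * b - 3) • A := by
  set K := 2 * b - 1
  intro x hx
  rw [show 4 * b - 2 = 2 * K by omega, mul_nsmul, two_nsmul, ← card_range K, ← sum_const,
    Set.mem_finsetSum] at hx
  obtain ⟨g, hg, rfl⟩ := hx
  have hdecomp (i : ℕ) (hi : i < K) := exists_endpoint_decomp hb hA hwin (hg (mem_range.2 hi))
  choose! e he w₁ hw₁ w₂ hw₂ p q hp₀ hp hq₀ hq hg₁ hg₂ using hdecomp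
  obtain ⟨k₁, k₂, hlt, hk₂, c, hc⟩ := exists_Ico_sum_eq_zero hb (p := p) (q := q)
    (fun i hi => ⟨hp₀ i hi, hp i hi⟩) (fun i hi => ⟨hq₀ i hi, hq i hi⟩)
  have hBK : Ico k₁ k₂ ⊆ range K := fun i hi => mem_range.2 (by simp at hi; omega)
  have hBK' {i : ℕ} (hi : i ∈ Ico k₁ k₂) : i < K := mem_range.1 (hBK hi)
  rw [show 4 * b - 3 = 2 * #(range K) - 1 by rw [card_range]; omega]
  refine Set.finsetSum_mem_add_nsmul_of_block (Set.pair_subset hm hM) hBK (left_mem_Ico.2 hlt)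
    (fun i hi => hg hi) (fun i hi => he i (hBK' hi))
    (w := fun i => if c i then w₁ i else w₂ i) (fun i hi => ?_) ?_
  · split
    · exact hw₁ i (hBK' hi)
    · exact hw₂ i (hBK' hi)
  calc ∑ i ∈ Ico k₁ k₂, g i
      = ∑ i ∈ Ico k₁ k₂, (e i + (if c i then w₁ i else w₂ i) + (if c i then p i else -q i)) :=
        sum_congr rfl fun i hi => by
          split
          · rw [hg₁ i (hBK' hi)]
          · rw [hg₂ i (hBK' hi)]; ring
    _ = ∑ i ∈ Ico k₁ k₂, (e i + if c i then w₁ i else w₂ i) := by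
        rw [sum_add_distrib, hc, add_zero]

end Windows

section Sequence

variable {b l : ℕ} (hl : 1 ≤ l) (a : Fin l → ℤ)

theorem range_subset_Icc_of_strictMono (hmono : StrictMono a) :
    Set.range a ⊆ Set.Icc (a ⟨0, by omega⟩) (a ⟨l - 1, by omega⟩) := by
  rintro _ ⟨i, rfl⟩
  exact ⟨hmono.monotone (Fin.mk_le_of_le_val (Nat.zero_le _)),
    hmono.monotone (Fin.le_def.2 (by simp; omega))⟩

theorem exists_range_mem_window
    (hgap : ∀ (i : ℕ) (h : i + 1 < l), a ⟨i + 1, h⟩ - a ⟨i, by omega⟩ ≤ (b : ℤ)) (v : ℤ)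
    (h₀ : a ⟨0, by omega⟩ < v + b) (h₁ : v ≤ a ⟨l - 1, by omega⟩) :
    ∃ w ∈ Set.range a, v ≤ w ∧ w < v + b := by
  classical
  have hex : ∃ j, ∃ h : j < l, v ≤ a ⟨j, h⟩ := ⟨l - 1, by omega, h₁⟩
  obtain ⟨j, ⟨hj, hv⟩, hmin⟩ : ∃ j, (∃ h : j < l, v ≤ a ⟨j, h⟩) ∧
      ∀ i < j, ¬∃ h : i < l, v ≤ a ⟨i, h⟩ :=
    ⟨Nat.find hex, Nat.find_spec hex, fun _ => Nat.find_min hex⟩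
  refine ⟨_, Set.mem_range_self _, hv, ?_⟩
  cases j with
  | zero => exact h₀
  | succ i =>
    have hprev : a ⟨i, by omega⟩ < v := lt_of_not_ge fun h => hmin i (by omega) ⟨by omega, h⟩
    have := hgap i hj
    omega

end Sequence

theorem stmt_0 (b l : ℕ) (hb : 1 ≤ b) (hl : 1 ≤ l) (a : Fin l → ℤ)
    (hmono : StrictMono a)
    (hgap : ∀ (i : ℕ) (h : i + 1 < l), a ⟨i + 1, h⟩ - a ⟨i, by omega⟩ ≤ (b : ℤ))
    (n : ℕ) (hn : 2 * b ^ 2 < n) :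
    foldSum n (Set.range a) =
      foldSum (n - 2 * b ^ 2) ({a ⟨0, by omega⟩, a ⟨l - 1, by omega⟩} : Set ℤ) +
        foldSum (2 * b ^ 2) (Set.range a) := by
  have hcore := nsmul_subset_endpoints_add_nsmul hb (Set.mem_range_self _) (Set.mem_range_self _)
    (range_subset_Icc_of_strictMono hl a hmono) (exists_range_mem_window hl a hgap)
  rw [show 4 * b - 2 = 4 * b - 3 + 1 by omega] at hcore
  have hthreshold : 4 * b ≤ 2 * b ^ 2 + 3 := by nlinarith
  rw [foldSum_eq_nsmul, foldSum_eq_nsmul, foldSum_eq_nsmul]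
  exact Set.nsmul_eq_nsmul_add_nsmul_of_le (Set.pair_subset (Set.mem_range_self _)
    (Set.mem_range_self _)) hcore (by omega) hn.le
end

section
/- Let $G$ be a finitely generated group of class at most 2 and $H \le G$ a subgroup generated by elements $x_1,\dots,x_r$ whose images in $G/[G,G]$ generate a free abelian group of rank $r$. Then $H \cap [G,G] = [H,H]$, and $H$ is torsion-free provided $[H,H]$ is torsion-free. -/
private lemma exists_rep {A : Type*} [CommGroup A] {r : ℕ} (y : Fin r → A) {a : A}
    (ha : a ∈ Subgroup.closure (Set.range y)) : ∃ m : Fin r → ℤ, a = ∏ i, y i ^ m i := by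
  induction ha using Subgroup.closure_induction with
  | mem g hg =>
    obtain ⟨j, rfl⟩ := hg
    refine ⟨Pi.single j 1, ?_⟩
    rw [Fintype.prod_eq_single j (fun i hi => by simp [Pi.single_eq_of_ne hi])]
    simp
  | one => exact ⟨0, by simp⟩
  | mul g h _ _ ihg ihh =>
    obtain ⟨m, rfl⟩ := ihg; obtain ⟨m', rfl⟩ := ihh
    exact ⟨m + m', by simp [zpow_add, Finset.prod_mul_distrib]⟩
  | inv g _ ihg =>
    obtain ⟨m, rfl⟩ := ihg
    exact ⟨-m, by simp⟩

theorem stmt_12 (G : Type*) [Group G] [Group.FG G]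
    -- class ≤ 2 : the commutator subgroup is central
    (hcen : (commutator G : Set G) ⊆ Subgroup.center G)
    (r : ℕ) (x : Fin r → G)
    (H : Subgroup G) (hH : H = Subgroup.closure (Set.range x))
    -- the images of the `xᵢ` in the abelianization generate a free abelian group of rank `r`
    (hfree : ∀ m : Fin r → ℤ,
      (∏ i, (Abelianization.of (x i)) ^ (m i)) = 1 → ∀ i, m i = 0) :
    H ⊓ commutator G = ⁅H, H⁆ ∧
    ((∀ g ∈ ⁅H, H⁆, g ≠ 1 → ¬ IsOfFinOrder g) →
      ∀ g ∈ H, g ≠ 1 → ¬ IsOfFinOrder g) := by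
  subst hH
  set H : Subgroup G := Subgroup.closure (Set.range x) with hH
  have hxH : ∀ i, x i ∈ H := fun i => Subgroup.subset_closure ⟨i, rfl⟩
  set q : H →* Abelianization H := Abelianization.of with hq
  set y : Fin r → Abelianization H := fun i => q ⟨x i, hxH i⟩ with hy
  set ψ : Abelianization H →* Abelianization G :=
    Abelianization.lift ((Abelianization.of).comp H.subtype) with hψ
  have hψq : ∀ h : H, ψ (q h) = Abelianization.of (h : G) := fun h => rfl
  have hψy : ∀ i, ψ (y i) = Abelianization.of (x i) := fun i => rfl
  -- every element of Ab H is a product of powers of the y i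
  have hgen : ∀ h : H, ∃ m : Fin r → ℤ, q h = ∏ i, y i ^ m i := by
    intro h
    have h1 : h ∈ Subgroup.closure (H.subtype ⁻¹' (Set.range x)) := by
      rw [Subgroup.closure_preimage_eq_top]; exact Subgroup.mem_top h
    have h2 : q h ∈ Subgroup.map q (Subgroup.closure (H.subtype ⁻¹' (Set.range x))) :=
      ⟨h, h1, rfl⟩
    rw [MonoidHom.map_closure] at h2
    refine exists_rep y (Subgroup.closure_mono ?_ h2)
    rintro _ ⟨a, ha, rfl⟩
    obtain ⟨i, hi⟩ := ha
    exact ⟨i, by rw [hy]; exact congrArg q (Subtype.ext hi)⟩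
  -- key: if of (h:G) = 1 then h ∈ ⁅H, H⁆
  have key : ∀ h : H, Abelianization.of (h : G) = 1 → (h : G) ∈ ⁅H, H⁆ := by
    intro h h1
    obtain ⟨m, hm⟩ := hgen h
    have hprod : ∏ i, (Abelianization.of (x i)) ^ (m i) = 1 := by
      have h2 := congrArg ψ hm
      rw [hψq, h1, map_prod] at h2
      simp only [map_zpow, hψy] at h2
      exact h2.symm
    have hm0 := hfree m hprod
    have hq1 : q h = 1 := by rw [hm]; simp [hm0]
    have hc : h ∈ commutator H := by rwa [← QuotientGroup.eq_one_iff h]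
    have hmem : (h : G) ∈ Subgroup.map H.subtype (commutator H) := ⟨h, hc, rfl⟩
    rwa [commutator_def, Subgroup.map_commutator, ← MonoidHom.range_eq_map,
      H.range_subtype] at hmem
  have hHHle : ⁅H, H⁆ ≤ H ⊓ commutator G := by
    refine le_inf (Subgroup.commutator_le.2 fun a ha b hb => ?_)
      (Subgroup.commutator_mono le_top le_top)
    exact commutatorElement_def a b ▸
      H.mul_mem (H.mul_mem (H.mul_mem ha hb) (H.inv_mem ha)) (H.inv_mem hb)
  constructor
  · refine le_antisymm (fun g hg => ?_) hHHle
    obtain ⟨hg1, hg2⟩ := hg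
    exact key ⟨g, hg1⟩ ((QuotientGroup.eq_one_iff g).2 hg2)
  · intro htf g hg hg1 hfin
    have hn : (orderOf g : ℤ) ≠ 0 := by exact_mod_cast hfin.orderOf_pos.ne'
    obtain ⟨m, hm⟩ := hgen ⟨g, hg⟩
    have hog : Abelianization.of g = ∏ i, (Abelianization.of (x i)) ^ (m i) := by
      have h2 := congrArg ψ hm
      rw [hψq, map_prod] at h2
      simpa only [map_zpow, hψy] using h2
    have hpow : ∏ i, (Abelianization.of (x i)) ^ ((orderOf g : ℤ) * m i) = 1 := by
      have : ∀ i, (Abelianization.of (x i)) ^ ((orderOf g : ℤ) * m i)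
          = ((Abelianization.of (x i)) ^ (m i)) ^ (orderOf g : ℤ) := fun i => by
        rw [← zpow_mul, mul_comm]
      rw [Finset.prod_congr rfl (fun i _ => this i), Finset.prod_zpow, ← hog,
        zpow_natCast, ← map_pow, pow_orderOf_eq_one, map_one]
    have hm0 : ∀ i, m i = 0 := fun i =>
      (mul_eq_zero.1 (hfree _ hpow i)).resolve_left hn
    have h1 : Abelianization.of g = 1 := by rw [hog]; simp [hm0]
    exact htf g (key ⟨g, hg⟩ h1) hg1 hfin
end
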